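/- arXiv:2204.04162 — 3 statements merged into one kernel-verified Lean document; each statement's English description precedes it below -/
import Mathlib

section
/- Let T^M assign a real threshold to each man and T^W a real threshold to each woman, and let E = {(m,w) : u(m,w) ≥ T^M(m) and v(m,w) ≥ T^W(w)}. If E contains every viable edge, then: (i) every stable matching μ of the full market satisfies (m, μ(m)) ∈ E for every man m; and (ii) a matching μ with (m, μ(m)) ∈ E for all m has no blocking pair belonging to E if and only if it has no blocking pair at all. Consequently, the stable matchings of the market restricted to the edge set E coincide exactly with the stable matchings of the full market. -/
/-! The edge set of a stable matching is viable (each partner gives the other exactly the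
utility of that matching), so it lies in `E`. Conversely, `E` is upward closed in both
coordinates: if `μ` lies in `E` and `(m, w)` blocks `μ`, then `m` prefers `w` to `μ m` and `w`
prefers `m` to her partner, so both thresholds are still met. Hence blocking
pairs of matchings inside `E` never leave `E`. -/

/-- `(m, w)` is a blocking pair for the matching `μ` (a bijection men → women),
where `u m w` is man `m`'s utility for woman `w` and `v m w` is woman `w`'s
utility for man `m`. -/
def Blocks {n : ℕ} (u v : Fin n → Fin n → ℝ) (μ : Fin n ≃ Fin n) (m w : Fin n) : Prop :=
  μ m ≠ w ∧ u m (μ m) < u m w ∧ v (μ.symm w) w < v m w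

/-- A matching is stable if it has no blocking pair. -/
def IsStable {n : ℕ} (u v : Fin n → Fin n → ℝ) (μ : Fin n ≃ Fin n) : Prop :=
  ∀ m w, ¬ Blocks u v μ m w

section

variable {n : ℕ} {u v : Fin n → Fin n → ℝ} {μ : Fin n ≃ Fin n}

theorem IsStable.mem_of_viable_subset {E : Set (Fin n × Fin n)}
    (hviable : ∀ m w : Fin n,
      (∃ μ : Fin n ≃ Fin n, IsStable u v μ ∧ u m (μ m) ≤ u m w) →
      (∃ μ' : Fin n ≃ Fin n, IsStable u v μ' ∧ v (μ'.symm w) w ≤ v m w) →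
      (m, w) ∈ E)
    (hμ : IsStable u v μ) (m : Fin n) : (m, μ m) ∈ E :=
  hviable m (μ m) ⟨μ, hμ, le_rfl⟩ ⟨μ, hμ, by rw [Equiv.symm_apply_apply]⟩

theorem Blocks.thresholds_le {TM TW : Fin n → ℝ}
    (hμ : ∀ m, TM m ≤ u m (μ m) ∧ TW (μ m) ≤ v m (μ m)) {m w : Fin n}
    (hb : Blocks u v μ m w) : TM m ≤ u m w ∧ TW w ≤ v m w := by
  obtain ⟨-, hm, hw⟩ := hb
  have hTW : TW w ≤ v (μ.symm w) w := by
    simpa only [Equiv.apply_symm_apply] using (hμ (μ.symm w)).2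
  exact ⟨(hμ m).1.trans hm.le, hTW.trans hw.le⟩

theorem isStable_iff_forall_mem_not_blocks {E : Set (Fin n × Fin n)}
    (hE : ∀ m w, Blocks u v μ m w → (m, w) ∈ E) :
    (∀ m w, (m, w) ∈ E → ¬ Blocks u v μ m w) ↔ IsStable u v μ :=
  ⟨fun h m w hb => h m w (hE m w hb) hb, fun h m w _ => h m w⟩

end

theorem stmt1_general {n : ℕ} (u v : Fin n → Fin n → ℝ)
    (TM TW : Fin n → ℝ)
    (E : Set (Fin n × Fin n))
    (hE : E = {p | TM p.1 ≤ u p.1 p.2 ∧ TW p.2 ≤ v p.1 p.2})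
    (hviable : ∀ m w : Fin n,
      (∃ μ : Fin n ≃ Fin n, IsStable u v μ ∧ u m (μ m) ≤ u m w) →
      (∃ μ' : Fin n ≃ Fin n, IsStable u v μ' ∧ v (μ'.symm w) w ≤ v m w) →
      (m, w) ∈ E) :
    (∀ μ : Fin n ≃ Fin n, IsStable u v μ → ∀ m, (m, μ m) ∈ E) ∧
    (∀ μ : Fin n ≃ Fin n, (∀ m, (m, μ m) ∈ E) →
      ((∀ m w, (m, w) ∈ E → ¬ Blocks u v μ m w) ↔ IsStable u v μ)) ∧
    (∀ μ : Fin n ≃ Fin n,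
      ((∀ m, (m, μ m) ∈ E) ∧ ∀ m w, (m, w) ∈ E → ¬ Blocks u v μ m w) ↔ IsStable u v μ) := by
  have stable_mem : ∀ μ : Fin n ≃ Fin n, IsStable u v μ → ∀ m, (m, μ m) ∈ E :=
    fun μ hμ => hμ.mem_of_viable_subset hviable
  have restricted_iff : ∀ μ : Fin n ≃ Fin n, (∀ m, (m, μ m) ∈ E) →
      ((∀ m w, (m, w) ∈ E → ¬ Blocks u v μ m w) ↔ IsStable u v μ) := by
    subst hE
    exact fun μ hμ => isStable_iff_forall_mem_not_blocks fun _ _ hb => hb.thresholds_le hμ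
  refine ⟨stable_mem, restricted_iff, fun μ => ⟨fun ⟨hμ, h⟩ => (restricted_iff μ hμ).1 h, ?_⟩⟩
  intro hμ
  exact ⟨stable_mem μ hμ, (restricted_iff μ (stable_mem μ hμ)).2 hμ⟩

/-- Let `E = {(m,w) : u(m,w) ≥ T^M(m) ∧ v(m,w) ≥ T^W(w)}` for thresholds
`T^M`, `T^W`. If `E` contains every viable edge (an edge is viable if some stable matching
gives `m` at most its utility, and some stable matching gives `w` at most her utility), then:
(i) every stable matching of the full market uses only edges of `E`;
(ii) for a matching contained in `E`, having no blocking pair in `E` is equivalent to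
having no blocking pair at all; and consequently
(iii) the stable matchings of the market restricted to `E` (matchings within `E` with no
blocking pair within `E`) are exactly the stable matchings of the full market. -/
theorem stmt1 {n : ℕ} (u v : Fin n → Fin n → ℝ)
    (hu : ∀ m, Function.Injective (u m))
    (hv : ∀ w, Function.Injective (fun m => v m w))
    (TM TW : Fin n → ℝ)
    (E : Set (Fin n × Fin n))
    (hE : E = {p | TM p.1 ≤ u p.1 p.2 ∧ TW p.2 ≤ v p.1 p.2})
    (hviable : ∀ m w : Fin n,
      (∃ μ : Fin n ≃ Fin n, IsStable u v μ ∧ u m (μ m) ≤ u m w) →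
      (∃ μ' : Fin n ≃ Fin n, IsStable u v μ' ∧ v (μ'.symm w) w ≤ v m w) →
      (m, w) ∈ E) :
    (∀ μ : Fin n ≃ Fin n, IsStable u v μ → ∀ m, (m, μ m) ∈ E) ∧
    (∀ μ : Fin n ≃ Fin n, (∀ m, (m, μ m) ∈ E) →
      ((∀ m w, (m, w) ∈ E → ¬ Blocks u v μ m w) ↔ IsStable u v μ)) ∧
    (∀ μ : Fin n ≃ Fin n,
      ((∀ m, (m, μ m) ∈ E) ∧ ∀ m w, (m, w) ∈ E → ¬ Blocks u v μ m w) ↔ IsStable u v μ) :=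
  stmt1_general u v TM TW E hE hviable
end

section
/- The probability that there exists an index i such that the number of indices j ≠ i with X_i − α ≤ X_j < X_i is at least (3/2)·α·(n−1) is at most n·exp(−α·(n−1)/12). -/
/-!
Fix `i`. Conditionally on `X i = x`, the other `n - 1` coordinates fall into the window
`[x - α, x)` independently, each with probability at most `α`, so the exponential moment of the
count is `E (3/2)^S ≤ (1 + α/2)^(n-1) ≤ exp (α (n-1)/2)`. Markov's inequality for `(3/2)^S` at
level `(3/2)^(3/2 α (n-1))` and `log (3/2) ≥ 7/18` give `P(S ≥ 3/2 α (n-1)) ≤ exp (-α (n-1)/12)`;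
a union bound over `i` finishes.
-/

open MeasureTheory ProbabilityTheory
open scoped ENNReal Finset

noncomputable section

/-- The uniform probability measure on `[0,1]`. -/
def unif : Measure ℝ := volume.restrict (Set.Icc (0:ℝ) 1)

instance : IsProbabilityMeasure unif :=
  ⟨by simp [unif]⟩

lemma unif_Ico_le (x α : ℝ) : unif (Set.Ico (x - α) x) ≤ ENNReal.ofReal α := by
  calc unif (Set.Ico (x - α) x) ≤ volume (Set.Ico (x - α) x) := Measure.restrict_apply_le _ _
    _ = ENNReal.ofReal α := by rw [Real.volume_Ico, sub_sub_cancel]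

lemma seven_div_eighteen_le_log_three_div_two : (7 : ℝ) / 18 ≤ Real.log (3 / 2) := by
  rw [Real.le_log_iff_exp_le (by norm_num)]
  refine le_of_pow_le_pow_left₀ (n := 18) (by norm_num) (by norm_num) ?_
  calc Real.exp (7 / 18) ^ 18 = Real.exp 1 ^ 7 := by
        rw [← Real.exp_nat_mul, ← Real.exp_nat_mul]; norm_num
    _ ≤ 2.7182818286 ^ 7 := by gcongr; exact Real.exp_one_lt_d9.le
    _ ≤ (3 / 2) ^ 18 := by norm_num

lemma three_div_two_rpow_neg_mul_exp_le {s : ℝ} (hs : 0 ≤ s) :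
    (3 / 2 : ℝ) ^ (-(3 / 2 * s)) * Real.exp (s / 2) ≤ Real.exp (-s / 12) := by
  rw [Real.rpow_def_of_pos (by norm_num), ← Real.exp_add, Real.exp_le_exp]
  nlinarith [mul_le_mul_of_nonneg_right seven_div_eighteen_le_log_three_div_two hs]

lemma measure_le_natCast_le_rpow_mul_lintegral {α : Type*} [MeasurableSpace α] (μ : Measure α)
    {S : α → ℕ} (hS : Measurable S) {c : ℝ} (hc : 1 ≤ c) (t : ℝ) :
    μ {x | t ≤ S x} ≤ ENNReal.ofReal (c ^ (-t)) * ∫⁻ x, ENNReal.ofReal c ^ S x ∂μ := by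
  rw [← lintegral_const_mul' _ _ ENNReal.ofReal_ne_top]
  refine meas_le_lintegral₀ (f := fun x => ENNReal.ofReal (c ^ (-t)) * ENNReal.ofReal c ^ S x)
    ((measurable_const.pow hS).const_mul _).aemeasurable fun x (hx : t ≤ S x) => ?_
  rw [← ENNReal.ofReal_pow (by linarith), ← ENNReal.ofReal_mul (by positivity),
    ← Real.rpow_natCast, ← Real.rpow_add (by linarith)]
  exact ENNReal.one_le_ofReal.2 (Real.one_le_rpow hc (by linarith))

section

variable {Ω : Type*} [MeasurableSpace Ω] (ν : Measure Ω) [IsProbabilityMeasure ν]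

lemma lintegral_pi_prod_eq_pow {ι : Type*} [Fintype ι] {f : Ω → ℝ≥0∞} (hf : Measurable f) :
    ∫⁻ y : ι → Ω, ∏ j, f (y j) ∂Measure.pi (fun _ => ν) = (∫⁻ x, f x ∂ν) ^ Fintype.card ι := by
  rw [lintegral_prod_eq_prod_lintegral_of_indepFun _ _
    (iIndepFun_pi (X := fun _ => f) fun _ => hf.aemeasurable)
    fun j => hf.comp (measurable_pi_apply j)]
  simp_rw [(measurePreserving_eval (fun _ => ν) _).lintegral_comp hf, Finset.prod_const,
    Finset.card_univ]

lemma lintegral_ite_le_exp {P : Ω → Prop} [DecidablePred P] (hP : MeasurableSet {y | P y})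
    {c p : ℝ} (hc : 1 ≤ c) (hp : 0 ≤ p) (hPp : ν {y | P y} ≤ ENNReal.ofReal p) :
    ∫⁻ y, (if P y then ENNReal.ofReal c else 1) ∂ν ≤ ENNReal.ofReal (Real.exp ((c - 1) * p)) := by
  have hsplit : ∀ y, (if P y then ENNReal.ofReal c else 1)
      = 1 + {y | P y}.indicator (fun _ => ENNReal.ofReal (c - 1)) y := by
    intro y
    by_cases hy : P y
    · simp [hy, ← ENNReal.ofReal_one, ← ENNReal.ofReal_add zero_le_one (sub_nonneg.2 hc)]
    · simp [hy]
  simp_rw [hsplit]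
  calc ∫⁻ y, 1 + {y | P y}.indicator (fun _ => ENNReal.ofReal (c - 1)) y ∂ν
      = 1 + ENNReal.ofReal (c - 1) * ν {y | P y} := by
        rw [lintegral_add_left measurable_const, lintegral_one, measure_univ,
          lintegral_indicator_const hP]
    _ ≤ 1 + ENNReal.ofReal (c - 1) * ENNReal.ofReal p := by gcongr
    _ = ENNReal.ofReal (1 + (c - 1) * p) := by
        rw [← ENNReal.ofReal_mul (sub_nonneg.2 hc), ← ENNReal.ofReal_one,
          ← ENNReal.ofReal_add zero_le_one (mul_nonneg (sub_nonneg.2 hc) hp)]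
    _ ≤ ENNReal.ofReal (Real.exp ((c - 1) * p)) :=
        ENNReal.ofReal_le_ofReal (by linarith [Real.add_one_le_exp ((c - 1) * p)])

variable {R : Ω → Ω → Prop} [DecidableRel R]

lemma measurable_card_filter_ne_rel (hR : MeasurableSet {q : Ω × Ω | R q.1 q.2}) {ι : Type*}
    [Fintype ι] [DecidableEq ι] (i : ι) :
    Measurable fun X : ι → Ω => #{j | j ≠ i ∧ R (X i) (X j)} := by
  simp_rw [Finset.card_filter]
  refine Finset.measurable_sum _ fun j _ => Measurable.ite ?_ measurable_const measurable_const
  exact (MeasurableSet.const _).inter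
    (hR.preimage (f := fun X : ι → Ω => (X i, X j)) (by fun_prop))

lemma lintegral_pow_card_filter_ne_rel_le (hR : MeasurableSet {q : Ω × Ω | R q.1 q.2})
    {c p : ℝ} (hc : 1 ≤ c) (hp : 0 ≤ p) (hν : ∀ x, ν {y | R x y} ≤ ENNReal.ofReal p)
    {m : ℕ} (i : Fin (m + 1)) :
    ∫⁻ X, ENNReal.ofReal c ^ #{j | j ≠ i ∧ R (X i) (X j)} ∂Measure.pi (fun _ => ν) ≤
      ENNReal.ofReal (Real.exp ((c - 1) * p * m)) := by
  have hsection : ∀ x, MeasurableSet {y | R x y} := fun x => hR.preimage measurable_prodMk_left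
  simp_rw [← Finset.prod_const, Finset.prod_filter]
  rw [← (measurePreserving_piFinSuccAbove (fun _ => ν) i).symm.lintegral_comp_emb
    (MeasurableEquiv.measurableEmbedding _)]
  simp only [MeasurableEquiv.piFinSuccAbove_symm_apply, Fin.insertNthEquiv, Equiv.coe_fn_mk,
    Fin.prod_univ_succAbove _ i, Fin.insertNth_apply_same, Fin.insertNth_apply_succAbove,
    ne_eq, not_true_eq_false, false_and, if_false, one_mul, Fin.succAbove_ne, not_false_eq_true,
    true_and]
  have hmeas : Measurable fun a : Ω × (Fin m → Ω) =>
      ∏ k, if R a.1 (a.2 k) then ENNReal.ofReal c else 1 :=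
    Finset.measurable_prod _ fun k _ => Measurable.ite
      (hR.preimage (f := fun a : Ω × (Fin m → Ω) => (a.1, a.2 k)) (by fun_prop))
      measurable_const measurable_const
  rw [lintegral_prod _ hmeas.aemeasurable]
  calc ∫⁻ x, ∫⁻ y, ∏ k, (if R x (y k) then ENNReal.ofReal c else 1) ∂Measure.pi (fun _ => ν) ∂ν
      ≤ ∫⁻ _, ENNReal.ofReal (Real.exp ((c - 1) * p)) ^ m ∂ν := by
        refine lintegral_mono fun x => ?_
        rw [lintegral_pi_prod_eq_pow ν (Measurable.ite (hsection x) measurable_const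
          measurable_const), Fintype.card_fin]
        exact pow_le_pow_left₀ zero_le (lintegral_ite_le_exp ν (hsection x) hc hp (hν x)) m
    _ = ENNReal.ofReal (Real.exp ((c - 1) * p * m)) := by
        rw [lintegral_const, measure_univ, mul_one, ← ENNReal.ofReal_pow (Real.exp_pos _).le,
          ← Real.exp_nat_mul, mul_comm]

lemma measure_card_filter_ne_rel_ge_le (hR : MeasurableSet {q : Ω × Ω | R q.1 q.2})
    {p : ℝ} (hp : 0 ≤ p) (hν : ∀ x, ν {y | R x y} ≤ ENNReal.ofReal p) {m : ℕ} (i : Fin (m + 1)) :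
    Measure.pi (fun _ => ν) {X | 3 / 2 * p * m ≤ (#{j | j ≠ i ∧ R (X i) (X j)} : ℝ)} ≤
      ENNReal.ofReal (Real.exp (-p * m / 12)) := by
  calc _ ≤ ENNReal.ofReal ((3 / 2 : ℝ) ^ (-(3 / 2 * p * m))) *
        ∫⁻ X, ENNReal.ofReal (3 / 2) ^ #{j | j ≠ i ∧ R (X i) (X j)} ∂Measure.pi (fun _ => ν) :=
        measure_le_natCast_le_rpow_mul_lintegral _ (measurable_card_filter_ne_rel hR i)
          (by norm_num) _
    _ ≤ ENNReal.ofReal ((3 / 2 : ℝ) ^ (-(3 / 2 * p * m))) *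
        ENNReal.ofReal (Real.exp ((3 / 2 - 1) * p * m)) := by
        gcongr
        exact lintegral_pow_card_filter_ne_rel_le ν hR (by norm_num) hp hν i
    _ ≤ ENNReal.ofReal (Real.exp (-p * m / 12)) := by
        rw [← ENNReal.ofReal_mul (by positivity)]
        refine ENNReal.ofReal_le_ofReal ?_
        convert three_div_two_rpow_neg_mul_exp_le (mul_nonneg hp m.cast_nonneg) using 3 <;> ring

end

/-- For `X_1, …, X_n` i.i.d. uniform on `[0,1]` and `α > 0`, the
probability that some index `i` has at least `(3/2)·α·(n-1)` indices `j ≠ i` with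
`X_i - α ≤ X_j < X_i` is at most `n · exp(-α(n-1)/12)`. -/
theorem stmt2 (n : ℕ) (α : ℝ) (hα : 0 < α) :
    (Measure.pi fun _ : Fin n => unif)
      {X | ∃ i : Fin n, (3/2) * α * ((n : ℝ) - 1) ≤
        ((Finset.univ.filter fun j => j ≠ i ∧ X i - α ≤ X j ∧ X j < X i).card : ℝ)} ≤
      ENNReal.ofReal (n * Real.exp (-α * ((n : ℝ) - 1) / 12)) := by
  obtain _ | m := n
  · simp
  have hwindow : MeasurableSet {q : ℝ × ℝ | q.1 - α ≤ q.2 ∧ q.2 < q.1} :=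
    (measurableSet_le (measurable_fst.sub_const α) measurable_snd).inter
      (measurableSet_lt measurable_snd measurable_fst)
  rw [Nat.cast_add_one, add_sub_cancel_right, Set.ofPred_exists]
  calc _ ≤ ∑ i : Fin (m + 1), Measure.pi (fun _ => unif)
        {X | 3 / 2 * α * m ≤ (#{j | j ≠ i ∧ X i - α ≤ X j ∧ X j < X i} : ℝ)} :=
        measure_iUnion_fintype_le _ _
    _ ≤ ∑ _i : Fin (m + 1), ENNReal.ofReal (Real.exp (-α * m / 12)) :=
        Finset.sum_le_sum fun i _ => measure_card_filter_ne_rel_ge_le unif hwindow hα.le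
          (fun x => unif_Ico_le x α) i
    _ = _ := by
        rw [Finset.sum_const, Finset.card_univ, Fintype.card_fin, nsmul_eq_mul,
          ENNReal.ofReal_mul (by positivity), ← Nat.cast_add_one, ENNReal.ofReal_natCast]
end
end

section
/- The probability of event B5 is at most n²·exp(−L·(n−2)/8). -/
/-!
Forgetting the rank constraints, `B5` is covered by the events, over the `n(n-1)/2` unordered pairs
`{b, b'}` of agents on either side, that `|r b - r b'| > 4L` while at most `3L(n-2)` of the other
`n - 2` agents have ratings in between. Conditionally on `r b` and `r b'`, those `n - 2` ratings are
i.i.d. uniform, and each falls in between with probability `|r b - r b'| > 4L`; the Chernoff bound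
for this binomial count bounds each event by `exp(-L(n-2)/8)`, and a union bound over the
`n(n-1) ≤ n²` events finishes.
-/

open MeasureTheory

noncomputable section

/-- Joint law of the men's and women's public ratings: `2n` i.i.d. uniforms on `[0,1]`. -/
def ratingsMeasure (n : ℕ) : Measure ((Fin n → ℝ) × (Fin n → ℝ)) :=
  (Measure.pi fun _ => unif).prod (Measure.pi fun _ => unif)

/-- 0-indexed rank: the number of agents with strictly larger rating. -/
def rankOf {n : ℕ} (r : Fin n → ℝ) (a : Fin n) : ℕ :=
  (Finset.univ.filter fun b => r a < r b).card

/-- Number of agents whose rating lies in the closed interval with endpoints `s` and `t`. -/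
def countBetween {n : ℕ} (r : Fin n → ℝ) (s t : ℝ) : ℕ :=
  (Finset.univ.filter fun m => min s t ≤ r m ∧ r m ≤ max s t).card

/-- Event B5: for some pair of ranks `i ≠ j` (with `m = m_i`, `m' = m_j`, `w = w_i`,
`w' = w_j`, `x = r_m − r_{m'}`, `y = r_w − r_{w'}`), either `|y| > 4L` and the number
of women with ratings between `r_w` and `r_{w'}` is at most `2 + 3L(n−2)`, or
`|x| > 4L` and the number of men with ratings between `r_m` and `r_{m'}` is at most
`2 + 3L(n−2)`. -/
def EventB5 (n : ℕ) (L : ℝ) (rM rW : Fin n → ℝ) : Prop :=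
  ∃ a a' b b' : Fin n, a ≠ a' ∧
    rankOf rM a = rankOf rW b ∧ rankOf rM a' = rankOf rW b' ∧
    ((4*L < |rW b - rW b'| ∧
        (countBetween rW (rW b) (rW b') : ℝ) ≤ 2 + 3*L*((n:ℝ)-2)) ∨
     (4*L < |rM a - rM a'| ∧
        (countBetween rM (rM a) (rM a') : ℝ) ≤ 2 + 3*L*((n:ℝ)-2)))

open ProbabilityTheory Finset

instance inst_s12 : IsProbabilityMeasure unif := by
  constructor
  simp [unif, Measure.restrict_apply MeasurableSet.univ, Real.volume_Icc]

lemma unif_real_Icc {a c : ℝ} (h0 : 0 ≤ a) (hac : a ≤ c) (h1 : c ≤ 1) :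
    unif.real (Set.Icc a c) = c - a := by
  rw [unif, measureReal_restrict_apply measurableSet_Icc,
    Set.inter_eq_self_of_subset_left (Set.Icc_subset_Icc h0 h1), Real.volume_real_Icc_of_le hac]

lemma exp_neg_quarter_le : Real.exp (-(1 / 4)) ≤ 25 / 32 := by
  have h : (493 : ℝ) / 384 ≤ Real.exp (1 / 4) := by
    have := Real.sum_le_exp_of_nonneg (x := 1 / 4) (by norm_num) 4
    norm_num [Finset.sum_range_succ, Nat.factorial] at this
    linarith
  rw [Real.exp_neg, inv_le_comm₀ (Real.exp_pos _) (by norm_num)]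
  linarith

section Chernoff

variable {ι α : Type*} [Fintype ι] [MeasurableSpace α] (μ : Measure α) [IsProbabilityMeasure μ]
  {S : Set α} [DecidablePred (· ∈ S)]

lemma measurable_card_mem (hS : MeasurableSet S) :
    Measurable fun u : ι → α => (#{i | u i ∈ S} : ℝ) := by
  simp only [natCast_card_filter]
  exact Finset.measurable_sum _ fun i _ =>
    Measurable.ite (measurable_pi_apply i hS) measurable_const measurable_const

lemma integral_exp_mul_indicator (hS : MeasurableSet S) (t : ℝ) :
    ∫ x, Real.exp (t * S.indicator 1 x) ∂μ = 1 + μ.real S * (Real.exp t - 1) := by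
  have h : (fun x => Real.exp (t * S.indicator 1 x))
      = fun x => 1 + S.indicator (fun _ => Real.exp t - 1) x := by
    funext x
    by_cases hx : x ∈ S <;> simp [hx]
  rw [h, integral_add (integrable_const _) ((integrable_const _).indicator hS),
    integral_indicator_const _ hS]
  simp

lemma mgf_card_mem (hS : MeasurableSet S) (t : ℝ) :
    mgf (fun u : ι → α => (#{i | u i ∈ S} : ℝ)) (Measure.pi fun _ => μ) t
      = (1 + μ.real S * (Real.exp t - 1)) ^ Fintype.card ι := by
  have h : ∀ u : ι → α, Real.exp (t * #{i | u i ∈ S})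
      = ∏ i, Real.exp (t * S.indicator 1 (u i)) := by
    intro u
    simp only [natCast_card_filter, mul_sum, Real.exp_sum, Set.indicator_apply, Pi.one_apply]
  simp only [mgf]
  simp_rw [h]
  rw [integral_fintype_prod_eq_pow (fun x => Real.exp (t * S.indicator 1 x)),
    integral_exp_mul_indicator μ hS]

/- The Chernoff bound at `t = -1/4`: the exponent `-L m / 8` comes out because
`3/4 - 4 (1 - exp (-1/4)) ≤ -1/8`. -/
lemma measure_card_mem_le_le_exp (hS : MeasurableSet S) {L : ℝ} (hL : 0 ≤ L)
    (hμS : 4 * L ≤ μ.real S) :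
    Measure.pi (fun _ : ι => μ) {u | (#{i | u i ∈ S} : ℝ) ≤ 3 * L * Fintype.card ι}
      ≤ ENNReal.ofReal (Real.exp (-L * Fintype.card ι / 8)) := by
  set m := Fintype.card ι
  set p := μ.real S
  set q := Real.exp (-(1 / 4))
  have hint : Integrable (fun u : ι → α => Real.exp (-(1 / 4) * #{i | u i ∈ S}))
      (Measure.pi fun _ => μ) := by
    refine Integrable.of_bound ((measurable_card_mem hS).const_mul _).exp.aestronglyMeasurable 1
      (ae_of_all _ fun u => ?_)
    rw [Real.norm_eq_abs, abs_of_pos (Real.exp_pos _), Real.exp_le_one_iff]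
    have : (0 : ℝ) ≤ #{i | u i ∈ S} := Nat.cast_nonneg _
    linarith
  have hq : q ≤ 25 / 32 := exp_neg_quarter_le
  have hp : p ≤ 1 := measureReal_le_one
  have hbase_nonneg : 0 ≤ 1 + p * (q - 1) := by nlinarith [Real.exp_pos (-(1 / 4) : ℝ)]
  have hbase_le : 1 + p * (q - 1) ≤ Real.exp (4 * L * (q - 1)) := by
    nlinarith [Real.add_one_le_exp (4 * L * (q - 1))]
  rw [← ofReal_measureReal]
  refine ENNReal.ofReal_le_ofReal ?_
  calc (Measure.pi fun _ : ι => μ).real {u | (#{i | u i ∈ S} : ℝ) ≤ 3 * L * m}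
      ≤ Real.exp (-(-(1 / 4)) * (3 * L * m)) * (1 + p * (q - 1)) ^ m := by
        rw [← mgf_card_mem μ hS]
        exact measure_le_le_exp_mul_mgf _ (by norm_num) hint
    _ ≤ Real.exp (-(-(1 / 4)) * (3 * L * m)) * Real.exp (4 * L * (q - 1)) ^ m := by
        gcongr
    _ = Real.exp (L * m * (3 / 4 + 4 * (q - 1))) := by
        rw [← Real.exp_nat_mul, ← Real.exp_add]
        ring_nf
    _ ≤ Real.exp (-L * m / 8) := by
        rw [Real.exp_le_exp]
        nlinarith [mul_nonneg hL (Nat.cast_nonneg m : (0 : ℝ) ≤ m)]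

end Chernoff

lemma measurable_card_mem_Icc {β ι : Type*} [Fintype ι] [MeasurableSpace β] {f g : β → ℝ}
    {X : ι → β → ℝ} (hf : Measurable f) (hg : Measurable g) (hX : ∀ i, Measurable (X i)) :
    Measurable fun z => (#{i | X i z ∈ Set.Icc (f z) (g z)} : ℝ) := by
  simp only [natCast_card_filter, Set.mem_Icc]
  exact Finset.measurable_sum _ fun i _ => Measurable.ite
    ((measurableSet_le hf (hX i)).inter (measurableSet_le (hX i) hg)) measurable_const
    measurable_const

def wideSparseGap (n : ℕ) (L : ℝ) (b b' : Fin n) : Set (Fin n → ℝ) :=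
  {r | 4 * L < |r b - r b'| ∧ (countBetween r (r b) (r b') : ℝ) ≤ 2 + 3 * L * ((n : ℝ) - 2)}

lemma wideSparseGap_comm (n : ℕ) (L : ℝ) (b b' : Fin n) :
    wideSparseGap n L b b' = wideSparseGap n L b' b := by
  ext r
  simp only [wideSparseGap, countBetween, Set.mem_ofPred_eq, abs_sub_comm (r b), min_comm (r b),
    max_comm (r b)]

section Pair

variable {n : ℕ} {L : ℝ} {b b' : Fin n}

lemma countBetween_eq_two_add (r : Fin n → ℝ) (hbb : b ≠ b') :
    countBetween r (r b) (r b') = 2 + #{j : {i // ¬(i = b ∨ i = b')} |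
      r j ∈ Set.Icc (min (r b) (r b')) (max (r b) (r b'))} := by
  rw [countBetween, card_filter, card_filter,
    ← Fintype.sum_subtype_add_sum_subtype (fun i => i = b ∨ i = b')]
  congr 1
  rw [sum_congr rfl fun (i : {i // i = b ∨ i = b'}) _ => if_pos ?_]
  · simp [Fintype.card_subtype, filter_or, filter_eq', card_pair hbb]
  obtain ⟨i, rfl | rfl⟩ := i
  · exact ⟨min_le_left _ _, le_max_left _ _⟩
  · exact ⟨min_le_right _ _, le_max_right _ _⟩

lemma measure_wideSparseGap_le (hL : 0 ≤ L) (hbb : b ≠ b') :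
    Measure.pi (fun _ : Fin n => unif) (wideSparseGap n L b b')
      ≤ ENNReal.ofReal (Real.exp (-L * ((n : ℝ) - 2) / 8)) := by
  set p : Fin n → Prop := fun i => i = b ∨ i = b'
  set B := ENNReal.ofReal (Real.exp (-L * ((n : ℝ) - 2) / 8)) with hB
  have hcard : (Fintype.card {i // ¬ p i} : ℝ) = n - 2 := by
    have hn : 2 ≤ n := by have := Fin.val_ne_of_ne hbb; omega
    have hp : Fintype.card {i // p i} = 2 := by
      simp [p, Fintype.card_subtype, filter_or, filter_eq', card_pair hbb]
    rw [Fintype.card_subtype_compl, hp, Fintype.card_fin, Nat.cast_sub hn, Nat.cast_ofNat]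
  let ib : {i // p i} := ⟨b, .inl rfl⟩
  let ib' : {i // p i} := ⟨b', .inr rfl⟩
  let U : Set (({i // p i} → ℝ) × ({i // ¬ p i} → ℝ)) :=
    {z | 4 * L < |z.1 ib - z.1 ib'| ∧
      (#{j | z.2 j ∈ Set.Icc (min (z.1 ib) (z.1 ib')) (max (z.1 ib) (z.1 ib'))} : ℝ)
        ≤ 3 * L * Fintype.card {i // ¬ p i}}
  have hsub :
      wideSparseGap n L b b' ⊆ MeasurableEquiv.piEquivPiSubtypeProd (fun _ => ℝ) p ⁻¹' U := by
    rintro r ⟨hgap, hcount⟩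
    refine ⟨hgap, ?_⟩
    rw [countBetween_eq_two_add r hbb] at hcount
    push_cast at hcount
    rw [hcard]
    exact le_of_add_le_add_left hcount
  have hU : MeasurableSet U := by
    have hfst : ∀ i, Measurable fun z : ({i // p i} → ℝ) × ({i // ¬ p i} → ℝ) => z.1 i :=
      fun i => by fun_prop
    exact (measurableSet_lt measurable_const ((hfst ib).sub (hfst ib')).abs).inter
      (measurableSet_le (measurable_card_mem_Icc ((hfst ib).min (hfst ib'))
        ((hfst ib).max (hfst ib')) fun j => by fun_prop) measurable_const)
  have hslice_le : ∀ᵐ s ∂(Measure.pi fun _ : {i // p i} => unif),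
      Measure.pi (fun _ : {i // ¬ p i} => unif) (Prod.mk s ⁻¹' U) ≤ B := by
    have hunit : ∀ i, ∀ᵐ s ∂(Measure.pi fun _ : {i // p i} => unif), s i ∈ Set.Icc (0 : ℝ) 1 :=
      fun i => Measure.tendsto_eval_ae_ae.eventually (ae_restrict_mem measurableSet_Icc)
    filter_upwards [hunit ib, hunit ib'] with s hs hs'
    by_cases hgap : 4 * L < |s ib - s ib'|
    · have hslice : Prod.mk s ⁻¹' U = {v | (#{j | v j ∈ Set.Icc (min (s ib) (s ib'))
          (max (s ib) (s ib'))} : ℝ) ≤ 3 * L * Fintype.card {i // ¬ p i}} := by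
        ext v
        simp [U, hgap]
      rw [hslice, hB, ← hcard]
      refine measure_card_mem_le_le_exp unif measurableSet_Icc hL ?_
      rw [unif_real_Icc (le_min hs.1 hs'.1) min_le_max (max_le hs.2 hs'.2), max_sub_min_eq_abs]
      exact abs_sub_comm (s ib) _ ▸ hgap.le
    · have hslice : Prod.mk s ⁻¹' U = ∅ := by
        ext v
        simp [U, hgap]
      simp [hslice]
  calc Measure.pi (fun _ : Fin n => unif) (wideSparseGap n L b b')
      ≤ Measure.pi (fun _ : Fin n => unif)
          (MeasurableEquiv.piEquivPiSubtypeProd (fun _ => ℝ) p ⁻¹' U) := measure_mono hsub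
    _ = ((Measure.pi fun _ : {i // p i} => unif).prod
          (Measure.pi fun _ : {i // ¬ p i} => unif)) U :=
        (measurePreserving_piEquivPiSubtypeProd (fun _ => unif) p).measure_preimage
          hU.nullMeasurableSet
    _ = ∫⁻ s, Measure.pi (fun _ : {i // ¬ p i} => unif) (Prod.mk s ⁻¹' U)
          ∂(Measure.pi fun _ : {i // p i} => unif) := Measure.prod_apply hU
    _ ≤ ∫⁻ _, B ∂(Measure.pi fun _ : {i // p i} => unif) := lintegral_mono_ae hslice_le
    _ = B := by simp

lemma exists_lt_mem_wideSparseGap {r : Fin n → ℝ} (hbb : b ≠ b')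
    (hr : r ∈ wideSparseGap n L b b') : ∃ c c', c < c' ∧ r ∈ wideSparseGap n L c c' := by
  rcases hbb.lt_or_gt with h | h
  · exact ⟨b, b', h, hr⟩
  · exact ⟨b', b, h, wideSparseGap_comm n L b b' ▸ hr⟩

end Pair

lemma eventB5_subset {n : ℕ} {L : ℝ} (hL : 0 ≤ L) :
    {ω : (Fin n → ℝ) × (Fin n → ℝ) | EventB5 n L ω.1 ω.2} ⊆
      ⋃ q ∈ ({q | q.1 < q.2} : Finset (Fin n × Fin n)),
        (Prod.fst ⁻¹' wideSparseGap n L q.1 q.2 ∪ Prod.snd ⁻¹' wideSparseGap n L q.1 q.2) := by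
  rintro ⟨rM, rW⟩ ⟨a, a', b, b', haa, -, -, hW | hM⟩
  · have hbb : b ≠ b' := by
      rintro rfl
      simp only [sub_self, abs_zero] at hW
      linarith [hW.1]
    obtain ⟨c, c', hc, hr⟩ := exists_lt_mem_wideSparseGap hbb hW
    exact Set.mem_biUnion (x := (c, c')) (by simpa using hc) (Or.inr hr)
  · obtain ⟨c, c', hc, hr⟩ := exists_lt_mem_wideSparseGap haa hM
    exact Set.mem_biUnion (x := (c, c')) (by simpa using hc) (Or.inl hr)

lemma ratingsMeasure_fst_union_snd_le (n : ℕ) (A : Set (Fin n → ℝ)) :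
    ratingsMeasure n (Prod.fst ⁻¹' A ∪ Prod.snd ⁻¹' A) ≤ 2 * Measure.pi (fun _ => unif) A := by
  refine (measure_union_le _ _).trans_eq ?_
  rw [← Set.prod_univ, ← Set.univ_prod, ratingsMeasure, Measure.prod_prod, Measure.prod_prod,
    measure_univ, mul_one, one_mul, two_mul]

/-- `Pr[B5] ≤ n²·exp(−L(n−2)/8)`. -/
theorem stmt12 (n : ℕ) (L : ℝ) (hL : 0 < L) :
    ratingsMeasure n {ω | EventB5 n L ω.1 ω.2} ≤
      ENNReal.ofReal ((n:ℝ)^2 * Real.exp (-L * ((n:ℝ) - 2) / 8)) := by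
  set e := Real.exp (-L * ((n : ℝ) - 2) / 8)
  have hpairs : 2 * (#{q : Fin n × Fin n | q.1 < q.2} : ℝ) ≤ n ^ 2 := by
    rw [Fintype.card_product_filter_lt, Fintype.card_fin]
    have := Nat.choose_le_pow_div (α := ℝ) 2 n
    norm_num at this
    linarith
  calc ratingsMeasure n {ω | EventB5 n L ω.1 ω.2}
      ≤ ∑ q ∈ ({q | q.1 < q.2} : Finset (Fin n × Fin n)),
          ratingsMeasure n (Prod.fst ⁻¹' wideSparseGap n L q.1 q.2 ∪
            Prod.snd ⁻¹' wideSparseGap n L q.1 q.2) :=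
        (measure_mono (eventB5_subset hL.le)).trans (measure_biUnion_finset_le _ _)
    _ ≤ ∑ q ∈ ({q | q.1 < q.2} : Finset (Fin n × Fin n)), ENNReal.ofReal (2 * e) := by
        refine sum_le_sum fun q hq => (ratingsMeasure_fst_union_snd_le n _).trans ?_
        rw [ENNReal.ofReal_mul zero_le_two, ENNReal.ofReal_ofNat]
        gcongr
        exact measure_wideSparseGap_le hL.le (mem_filter.mp hq).2.ne
    _ = ENNReal.ofReal (#{q : Fin n × Fin n | q.1 < q.2} * (2 * e)) := by
        rw [sum_const, ← ENNReal.ofReal_nsmul, nsmul_eq_mul]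
    _ ≤ ENNReal.ofReal (n ^ 2 * e) := by
        refine ENNReal.ofReal_le_ofReal ?_
        nlinarith [Real.exp_pos (-L * ((n : ℝ) - 2) / 8)]

end
end
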